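/- arXiv:2004.07059 — 2 statements merged into one kernel-verified Lean document; each statement's English description precedes it below -/
import Mathlib

section
/- Let C = C(a₁, a₂, a₃, a₄, a₅) be a quaternary [n, 2, d] code with 1 + a₂ + a₃ + a₄ + a₅ = d, and for 1 ≤ i ≤ 5 set bᵢ = (n − d) − aᵢ (as integers). Then C is a Hermitian LCD code if and only if all of the following hold: (i) b₁ = 1; (ii) b₂ ≥ 1; (iii) b₃ ≥ 0, b₄ ≥ 0, b₅ ≥ 0; (iv) if d is even then b₃ + b₄ + b₅ + b₃b₄ + b₄b₅ + b₅b₃ is odd, and if d is odd then b₃b₄ + b₄b₅ + b₅b₃ is odd. -/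
open Finset

/-- The finite field with four elements. -/
abbrev F4 : Type := GaloisField 2 2

noncomputable instance : Fintype F4 := Fintype.ofFinite F4

lemma F4.card_eq : Fintype.card F4 = 4 := by
  simpa using GaloisField.card 2 2 (by norm_num)

lemma F4.exists_omega : ∃ x : F4, x ^ 2 + x + 1 = 0 := by
  classical
  obtain ⟨x, hx0, hx1⟩ : ∃ x : F4, x ≠ 0 ∧ x ≠ 1 := by
    by_contra h
    push_neg at h
    have hsub : (Finset.univ : Finset F4) ⊆ {0, 1} := by
      intro x _
      rcases eq_or_ne x 0 with h0 | h0
      · simp [h0]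
      · simp [h x h0]
    have h1 := Finset.card_le_card hsub
    have h2 : ({0, 1} : Finset F4).card ≤ 2 := (Finset.card_insert_le _ _).trans (by simp)
    have h3 : (Finset.univ : Finset F4).card = 4 := F4.card_eq
    omega
  refine ⟨x, ?_⟩
  have hx : x ^ Fintype.card F4 = x := FiniteField.pow_card x
  rw [F4.card_eq] at hx
  have hmul : x * (x - 1) * (x ^ 2 + x + 1) = 0 := by
    have : x * (x - 1) * (x ^ 2 + x + 1) = x ^ 4 - x := by ring
    rw [this, hx, sub_self]
  rcases mul_eq_zero.mp hmul with h | h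
  · rcases mul_eq_zero.mp h with h | h
    · exact absurd h hx0
    · exact absurd (sub_eq_zero.mp h) hx1
  · exact h

/-- A fixed root of `X² + X + 1` in `F₄`. -/
noncomputable def ω4 : F4 := Classical.choose F4.exists_omega

lemma ω4_spec : ω4 ^ 2 + ω4 + 1 = 0 := Classical.choose_spec F4.exists_omega

open scoped Classical in
/-- Hamming weight of a vector. -/
noncomputable def wt {n : ℕ} (x : Fin n → F4) : ℕ :=
  (Finset.univ.filter fun i => x i ≠ 0).card

/-- `C` is a code with minimum (nonzero) weight `d`. -/
noncomputable def hasMinWeight {n : ℕ} (C : Submodule F4 (Fin n → F4)) (d : ℕ) : Prop :=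
  (∀ x ∈ C, x ≠ 0 → d ≤ wt x) ∧ ∃ x ∈ C, x ≠ 0 ∧ wt x = d

/-- The Hermitian inner product on `F₄ⁿ`; the conjugate of `x` is `x²`. -/
noncomputable def hermInner {n : ℕ} (u v : Fin n → F4) : F4 := ∑ i, u i * (v i) ^ 2

/-- The Hermitian dual code. -/
noncomputable def hermDual {n : ℕ} (C : Submodule F4 (Fin n → F4)) : Submodule F4 (Fin n → F4) where
  carrier := {x | ∀ y ∈ C, hermInner x y = 0}
  zero_mem' := by intro y hy; simp [hermInner]
  add_mem' := by
    intro a b ha hb y hy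
    have := ha y hy
    have := hb y hy
    simp only [hermInner, Pi.add_apply, add_mul, Finset.sum_add_distrib] at *
    simp [*]
  smul_mem' := by
    intro c a ha y hy
    have h := ha y hy
    simp only [hermInner, Pi.smul_apply, smul_eq_mul, mul_assoc, ← Finset.mul_sum] at *
    simp [h]

/-- `C` is a Hermitian linear complementary dual code. -/
noncomputable def IsHermLCD {n : ℕ} (C : Submodule F4 (Fin n → F4)) : Prop :=
  C ⊓ hermDual C = ⊥

/-- The monomial linear map given by a permutation of coordinates followed by a
multiplication of each coordinate by a scalar. -/
noncomputable def monoMap {n : ℕ} (σ : Equiv.Perm (Fin n)) (s : Fin n → F4) :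
    (Fin n → F4) →ₗ[F4] (Fin n → F4) where
  toFun x := fun i => s i * x (σ i)
  map_add' a b := by funext i; simp [mul_add]
  map_smul' c a := by funext i; simp [smul_eq_mul]; ring

/-- Two codes are equivalent if one is obtained from the other by a permutation of the
coordinates and multiplication of coordinates by nonzero scalars. -/
noncomputable def codeEquiv {n : ℕ} (C C' : Submodule F4 (Fin n → F4)) : Prop :=
  ∃ (σ : Equiv.Perm (Fin n)) (s : Fin n → F4),
    (∀ i, s i ≠ 0) ∧ Submodule.map (monoMap σ s) C = C'

/-- First row of the generator matrix `G(a₁, a₂, a₃, a₄, a₅)`. -/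
noncomputable def row1 (n a₁ : ℕ) : Fin n → F4 := fun i =>
  if i.val = 0 then 1
  else if i.val < 2 + a₁ then 0
  else 1

/-- Second row of the generator matrix `G(a₁, a₂, a₃, a₄, a₅)`. -/
noncomputable def row2 (n a₁ a₂ a₃ a₄ : ℕ) : Fin n → F4 := fun i =>
  if i.val = 0 then 0
  else if i.val < 2 + a₁ then 1
  else if i.val < 2 + a₁ + a₂ then 0
  else if i.val < 2 + a₁ + a₂ + a₃ then 1
  else if i.val < 2 + a₁ + a₂ + a₃ + a₄ then ω4
  else ω4 ^ 2

set_option linter.unusedVariables false in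
/-- The code `C(a₁, a₂, a₃, a₄, a₅)`, of length `n = 2 + a₁ + a₂ + a₃ + a₄ + a₅`:
the span of the rows of the generator matrix `G(a₁, a₂, a₃, a₄, a₅)` whose columns are
`(1,0)ᵀ`, `(0,1)ᵀ`, `a₁` columns `(0,1)ᵀ`, `a₂` columns `(1,0)ᵀ`, `a₃` columns `(1,1)ᵀ`,
`a₄` columns `(1,ω)ᵀ` and `a₅` columns `(1,ω²)ᵀ`. -/
noncomputable def Ccode (n a₁ a₂ a₃ a₄ a₅ : ℕ) : Submodule F4 (Fin n → F4) :=
  Submodule.span F4 {row1 n a₁, row2 n a₁ a₂ a₃ a₄}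

/-- The largest minimum weight among Hermitian LCD `[n,2]` codes. -/
def optimalDist (n : ℕ) : ℕ :=
  if n % 5 = 1 ∨ n % 5 = 2 ∨ n % 5 = 3 then 4 * n / 5 else 4 * n / 5 - 1

/-- `C` is an optimal Hermitian LCD `[n, 2, d]` code. -/
noncomputable def IsOptimalLCD (n d : ℕ) (C : Submodule F4 (Fin n → F4)) : Prop :=
  Module.finrank F4 C = 2 ∧ hasMinWeight C d ∧ IsHermLCD C ∧ d = optimalDist n

/-- The linear map appending a zero coordinate: `x ↦ (x, 0)`. -/
noncomputable def extendZero (m : ℕ) : (Fin m → F4) →ₗ[F4] (Fin (m + 1) → F4) where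
  toFun x := Fin.snoc x 0
  map_add' a b := by
    funext i
    refine Fin.lastCases ?_ ?_ i <;> simp
  map_smul' c a := by
    funext i
    refine Fin.lastCases ?_ ?_ i <;> simp


/-! ### Auxiliary lemmas for stmt2 -/

section Stmt2Aux

open Finset

lemma F4two : (2 : F4) = 0 := by exact_mod_cast CharP.cast_eq_zero F4 2

lemma ω4_cube : ω4 ^ 3 = 1 := by linear_combination (ω4 - 1) * ω4_spec

lemma ω4_ne_zero : ω4 ≠ 0 := by
  intro h
  have h2 := ω4_spec
  rw [h] at h2
  simpa using h2

lemma one_add_ω4_ne : (1 : F4) + ω4 ≠ 0 := by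
  intro h
  have h1 : ω4 = 1 := by linear_combination h - F4two
  have h2 := ω4_spec
  rw [h1] at h2
  exact one_ne_zero (by linear_combination h2 - F4two)

lemma one_add_ω4sq_ne : (1 : F4) + ω4 ^ 2 ≠ 0 := by
  intro h
  exact ω4_ne_zero (by linear_combination ω4_spec - h)

lemma f1fact : (1 : F4) + 1 = 0 := by linear_combination F4two
lemma f5fact : (1 : F4) + ω4 * ω4 ^ 2 = 0 := by linear_combination ω4_cube + F4two
lemma f6fact : (1 : F4) + ω4 * ω4 ≠ 0 := fun h => one_add_ω4sq_ne (by linear_combination h)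
lemma f7fact : (1 : F4) + ω4 ^ 2 * ω4 = 0 := by linear_combination ω4_cube + F4two
lemma f8fact : (1 : F4) + ω4 ^ 2 * ω4 ^ 2 ≠ 0 :=
  fun h => one_add_ω4_ne (by linear_combination h - ω4 * ω4_cube)
lemma f2sq : ω4 ^ 2 ≠ 0 := pow_ne_zero 2 ω4_ne_zero

/-- Columns of the generator matrix, first row, as a function on `ℕ`. -/
noncomputable def R1 (a₁ j : ℕ) : F4 := if j = 0 then 1 else if j < 2 + a₁ then 0 else 1

/-- Columns of the generator matrix, second row, as a function on `ℕ`. -/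
noncomputable def R2 (a₁ a₂ a₃ a₄ j : ℕ) : F4 :=
  if j = 0 then 0
  else if j < 2 + a₁ then 1
  else if j < 2 + a₁ + a₂ then 0
  else if j < 2 + a₁ + a₂ + a₃ then 1
  else if j < 2 + a₁ + a₂ + a₃ + a₄ then ω4
  else ω4 ^ 2

lemma R1_mid (a₁ j : ℕ) (h1 : 1 ≤ j) (h2 : j < 2 + a₁) : R1 a₁ j = 0 := by
  unfold R1; rw [if_neg (show ¬(j = 0) by omega), if_pos h2]

lemma R1_hi (a₁ j : ℕ) (h : 2 + a₁ ≤ j) : R1 a₁ j = 1 := by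
  unfold R1; rw [if_neg (show ¬(j = 0) by omega), if_neg (show ¬(j < 2 + a₁) by omega)]

lemma R2_1 (a₁ a₂ a₃ a₄ j : ℕ) (h1 : 1 ≤ j) (h2 : j < 2 + a₁) : R2 a₁ a₂ a₃ a₄ j = 1 := by
  unfold R2; rw [if_neg (show ¬(j = 0) by omega), if_pos h2]

lemma R2_2 (a₁ a₂ a₃ a₄ j : ℕ) (h1 : 2 + a₁ ≤ j) (h2 : j < 2 + a₁ + a₂) :
    R2 a₁ a₂ a₃ a₄ j = 0 := by
  unfold R2
  rw [if_neg (show ¬(j = 0) by omega), if_neg (show ¬(j < 2 + a₁) by omega), if_pos h2]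

lemma R2_3 (a₁ a₂ a₃ a₄ j : ℕ) (h1 : 2 + a₁ + a₂ ≤ j) (h2 : j < 2 + a₁ + a₂ + a₃) :
    R2 a₁ a₂ a₃ a₄ j = 1 := by
  unfold R2
  rw [if_neg (show ¬(j = 0) by omega), if_neg (show ¬(j < 2 + a₁) by omega),
    if_neg (show ¬(j < 2 + a₁ + a₂) by omega), if_pos h2]

lemma R2_4 (a₁ a₂ a₃ a₄ j : ℕ) (h1 : 2 + a₁ + a₂ + a₃ ≤ j) (h2 : j < 2 + a₁ + a₂ + a₃ + a₄) :
    R2 a₁ a₂ a₃ a₄ j = ω4 := by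
  unfold R2
  rw [if_neg (show ¬(j = 0) by omega), if_neg (show ¬(j < 2 + a₁) by omega),
    if_neg (show ¬(j < 2 + a₁ + a₂) by omega), if_neg (show ¬(j < 2 + a₁ + a₂ + a₃) by omega),
    if_pos h2]

lemma R2_5 (a₁ a₂ a₃ a₄ j : ℕ) (h1 : 2 + a₁ + a₂ + a₃ + a₄ ≤ j) :
    R2 a₁ a₂ a₃ a₄ j = ω4 ^ 2 := by
  unfold R2
  rw [if_neg (show ¬(j = 0) by omega), if_neg (show ¬(j < 2 + a₁) by omega),
    if_neg (show ¬(j < 2 + a₁ + a₂) by omega), if_neg (show ¬(j < 2 + a₁ + a₂ + a₃) by omega),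
    if_neg (show ¬(j < 2 + a₁ + a₂ + a₃ + a₄) by omega)]

/-- Splitting a sum over `range (2+a₁+a₂+a₃+a₄+a₅)` into the six constant blocks. -/
lemma sum_eval {M : Type*} [AddCommMonoid M] (a₁ a₂ a₃ a₄ a₅ : ℕ) (f : ℕ → M)
    (c₀ c₁ c₂ c₃ c₄ c₅ : M)
    (h0 : f 0 = c₀)
    (h1 : ∀ j, 1 ≤ j → j < 2 + a₁ → f j = c₁)
    (h2 : ∀ j, 2 + a₁ ≤ j → j < 2 + a₁ + a₂ → f j = c₂)
    (h3 : ∀ j, 2 + a₁ + a₂ ≤ j → j < 2 + a₁ + a₂ + a₃ → f j = c₃)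
    (h4 : ∀ j, 2 + a₁ + a₂ + a₃ ≤ j → j < 2 + a₁ + a₂ + a₃ + a₄ → f j = c₄)
    (h5 : ∀ j, 2 + a₁ + a₂ + a₃ + a₄ ≤ j → j < 2 + a₁ + a₂ + a₃ + a₄ + a₅ → f j = c₅) :
    ∑ i ∈ Finset.range (2 + a₁ + a₂ + a₃ + a₄ + a₅), f i
      = c₀ + (1 + a₁) • c₁ + a₂ • c₂ + a₃ • c₃ + a₄ • c₄ + a₅ • c₅ := by
  have e : 2 + a₁ + a₂ + a₃ + a₄ + a₅ = 1 + (1 + a₁) + a₂ + a₃ + a₄ + a₅ := by omega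
  rw [e, Finset.sum_range_add, Finset.sum_range_add, Finset.sum_range_add,
    Finset.sum_range_add, Finset.sum_range_add, Finset.sum_range_one]
  have s1 : ∑ i ∈ Finset.range (1 + a₁), f (1 + i) = (1 + a₁) • c₁ := by
    rw [Finset.sum_congr rfl (fun i hi => h1 (1 + i) (by omega)
      (by have := Finset.mem_range.mp hi; omega))]
    simp
  have s2 : ∑ i ∈ Finset.range a₂, f (1 + (1 + a₁) + i) = a₂ • c₂ := by
    rw [Finset.sum_congr rfl (fun i hi => h2 (1 + (1 + a₁) + i) (by omega)
      (by have := Finset.mem_range.mp hi; omega))]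
    simp
  have s3 : ∑ i ∈ Finset.range a₃, f (1 + (1 + a₁) + a₂ + i) = a₃ • c₃ := by
    rw [Finset.sum_congr rfl (fun i hi => h3 (1 + (1 + a₁) + a₂ + i) (by omega)
      (by have := Finset.mem_range.mp hi; omega))]
    simp
  have s4 : ∑ i ∈ Finset.range a₄, f (1 + (1 + a₁) + a₂ + a₃ + i) = a₄ • c₄ := by
    rw [Finset.sum_congr rfl (fun i hi => h4 (1 + (1 + a₁) + a₂ + a₃ + i) (by omega)
      (by have := Finset.mem_range.mp hi; omega))]
    simp
  have s5 : ∑ i ∈ Finset.range a₅, f (1 + (1 + a₁) + a₂ + a₃ + a₄ + i) = a₅ • c₅ := by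
    rw [Finset.sum_congr rfl (fun i hi => h5 (1 + (1 + a₁) + a₂ + a₃ + a₄ + i) (by omega)
      (by have := Finset.mem_range.mp hi; omega))]
    simp
  rw [h0, s1, s2, s3, s4, s5]

lemma herm_eq_range {n : ℕ} (u v : Fin n → F4) (f : ℕ → F4)
    (h : ∀ i : Fin n, u i * (v i) ^ 2 = f i.val) :
    hermInner u v = ∑ j ∈ Finset.range n, f j := by
  unfold hermInner
  rw [Finset.sum_congr rfl fun i _ => h i]
  exact Fin.sum_univ_eq_sum_range f n

open scoped Classical in
lemma wt_eq_range {n : ℕ} (x : Fin n → F4) (f : ℕ → F4) (h : ∀ i : Fin n, x i = f i.val) :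
    wt x = ∑ j ∈ Finset.range n, if f j ≠ 0 then 1 else 0 := by
  classical
  calc wt x = ∑ i : Fin n, (if f i.val ≠ 0 then 1 else 0) := by
        unfold wt
        rw [Finset.card_filter]
        exact Finset.sum_congr rfl fun i _ => if_congr (by rw [h i]) rfl rfl
    _ = _ := Fin.sum_univ_eq_sum_range (fun j => if f j ≠ 0 then (1:ℕ) else 0) n

lemma hermInner_add_left {n : ℕ} (u v w : Fin n → F4) :
    hermInner (u + v) w = hermInner u w + hermInner v w := by
  unfold hermInner
  rw [← Finset.sum_add_distrib]
  exact Finset.sum_congr rfl fun i _ => by simp [add_mul]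

lemma hermInner_smul_left {n : ℕ} (c : F4) (u w : Fin n → F4) :
    hermInner (c • u) w = c * hermInner u w := by
  unfold hermInner
  rw [Finset.mul_sum]
  exact Finset.sum_congr rfl fun i _ => by simp [mul_assoc]

lemma hermInner_right {n : ℕ} (x u v : Fin n → F4) (α β : F4) :
    hermInner x (α • u + β • v) = α ^ 2 * hermInner x u + β ^ 2 * hermInner x v := by
  unfold hermInner
  rw [Finset.mul_sum, Finset.mul_sum, ← Finset.sum_add_distrib]
  refine Finset.sum_congr rfl fun i _ => ?_
  simp only [Pi.add_apply, Pi.smul_apply, smul_eq_mul]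
  linear_combination (x i * α * β * u i * v i) * F4two

lemma zmod2_cases : ∀ x : ZMod 2, x = 0 ∨ x = 1 := by decide

lemma nat_odd_cast (n : ℕ) : Odd n ↔ (n : ZMod 2) = 1 := by
  rw [Nat.odd_iff, ← Nat.not_even_iff, even_iff_two_dvd]
  constructor
  · intro h
    rcases zmod2_cases (n : ZMod 2) with h0 | h1
    · exact absurd ((ZMod.natCast_eq_zero_iff n 2).mp h0) h
    · exact h1
  · intro h1 hdvd
    have h0 : (n : ZMod 2) = 0 := (ZMod.natCast_eq_zero_iff n 2).mpr hdvd
    rw [h0] at h1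
    exact one_ne_zero h1.symm

lemma int_odd_cast (z : ℤ) : Odd z ↔ (z : ZMod 2) = 1 := by
  rw [Int.odd_iff, ← Int.not_even_iff, even_iff_two_dvd]
  constructor
  · intro h
    rcases zmod2_cases (z : ZMod 2) with h0 | h1
    · exact absurd ((ZMod.intCast_zmod_eq_zero_iff_dvd z 2).mp h0) (by exact_mod_cast h)
    · exact h1
  · intro h1 hdvd
    have h0 : (z : ZMod 2) = 0 := (ZMod.intCast_zmod_eq_zero_iff_dvd z 2).mpr (by exact_mod_cast hdvd)
    rw [h0] at h1
    exact one_ne_zero h1.symm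

lemma nat_even_cast (n : ℕ) : Even n ↔ (n : ZMod 2) = 0 := by
  rw [even_iff_two_dvd]
  exact (ZMod.natCast_eq_zero_iff n 2).symm

lemma parity_final (a₁ a₃ a₄ a₅ d : ℕ) (b₃ b₄ b₅ : ℤ)
    (hb₃ : b₃ = 1 + (a₁:ℤ) - a₃) (hb₄ : b₄ = 1 + (a₁:ℤ) - a₄) (hb₅ : b₅ = 1 + (a₁:ℤ) - a₅) :
    (d * (1 + a₁ + a₃ + a₄ + a₅) + (a₃*a₃ + a₄*a₄ + a₅*a₅ + a₃*a₄ + a₄*a₅ + a₅*a₃)) % 2 = 1 ↔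
      ((Even d → Odd (b₃ + b₄ + b₅ + b₃ * b₄ + b₄ * b₅ + b₅ * b₃)) ∧
       (Odd d → Odd (b₃ * b₄ + b₄ * b₅ + b₅ * b₃))) := by
  subst hb₃ hb₄ hb₅
  rw [← Nat.odd_iff, nat_odd_cast, nat_even_cast, nat_odd_cast, int_odd_cast, int_odd_cast]
  push_cast
  generalize (a₁ : ZMod 2) = x1
  generalize (a₃ : ZMod 2) = x3
  generalize (a₄ : ZMod 2) = x4
  generalize (a₅ : ZMod 2) = x5
  generalize (d : ZMod 2) = xd
  revert x1 x3 x4 x5 xd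
  decide

end Stmt2Aux

set_option maxHeartbeats 1000000 in
/-- characterisation of the Hermitian LCD property for `C(a₁, a₂, a₃, a₄, a₅)`
in terms of the integers `bᵢ = (n - d) - aᵢ`. -/
theorem stmt2 (n d a₁ a₂ a₃ a₄ a₅ : ℕ)
    (hn : n = 2 + a₁ + a₂ + a₃ + a₄ + a₅)
    (hdim : Module.finrank F4 (Ccode n a₁ a₂ a₃ a₄ a₅) = 2)
    (hmin : hasMinWeight (Ccode n a₁ a₂ a₃ a₄ a₅) d)
    (hd : 1 + a₂ + a₃ + a₄ + a₅ = d)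
    (b₁ b₂ b₃ b₄ b₅ : ℤ)
    (hb₁ : b₁ = ((n : ℤ) - d) - a₁) (hb₂ : b₂ = ((n : ℤ) - d) - a₂)
    (hb₃ : b₃ = ((n : ℤ) - d) - a₃) (hb₄ : b₄ = ((n : ℤ) - d) - a₄)
    (hb₅ : b₅ = ((n : ℤ) - d) - a₅) :
    IsHermLCD (Ccode n a₁ a₂ a₃ a₄ a₅) ↔
      (b₁ = 1 ∧ 1 ≤ b₂ ∧ 0 ≤ b₃ ∧ 0 ≤ b₄ ∧ 0 ≤ b₅ ∧
        (Even d → Odd (b₃ + b₄ + b₅ + b₃ * b₄ + b₄ * b₅ + b₅ * b₃)) ∧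
        (Odd d → Odd (b₃ * b₄ + b₄ * b₅ + b₅ * b₃))) := by
  classical
  set r1 := row1 n a₁ with hr1d
  set r2 := row2 n a₁ a₂ a₃ a₄ with hr2d
  have hC : Ccode n a₁ a₂ a₃ a₄ a₅ = Submodule.span F4 {r1, r2} := rfl
  have hr1C : r1 ∈ Ccode n a₁ a₂ a₃ a₄ a₅ := by
    rw [hC]; exact Submodule.subset_span (Set.mem_insert _ _)
  have hr2C : r2 ∈ Ccode n a₁ a₂ a₃ a₄ a₅ := by
    rw [hC]; exact Submodule.subset_span (Set.mem_insert_of_mem _ rfl)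
  -- linear independence of the two rows
  have hind : ∀ α β : F4, α • r1 + β • r2 = 0 → α = 0 ∧ β = 0 := by
    intro α β h
    have h0 : α * R1 a₁ 0 + β * R2 a₁ a₂ a₃ a₄ 0 = 0 := congrFun h ⟨0, by omega⟩
    have h1 : α * R1 a₁ 1 + β * R2 a₁ a₂ a₃ a₄ 1 = 0 := congrFun h ⟨1, by omega⟩
    rw [R1_mid a₁ 1 le_rfl (by omega), R2_1 a₁ a₂ a₃ a₄ 1 le_rfl (by omega)] at h1
    norm_num [R1, R2] at h0 h1
    exact ⟨h0, h1⟩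
  -- the four Hermitian inner products of the rows
  have e11 : hermInner r1 r1 = 1 + (a₂ : F4) + a₃ + a₄ + a₅ := by
    rw [herm_eq_range r1 r1 (fun j => R1 a₁ j * (R1 a₁ j) ^ 2) (fun i => rfl), hn,
      sum_eval a₁ a₂ a₃ a₄ a₅ _ 1 0 1 1 1 1
        (by norm_num [R1])
        (fun j h h' => by rw [R1_mid a₁ j h h']; ring)
        (fun j h h' => by rw [R1_hi a₁ j (by omega)]; ring)
        (fun j h h' => by rw [R1_hi a₁ j (by omega)]; ring)
        (fun j h h' => by rw [R1_hi a₁ j (by omega)]; ring)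
        (fun j h h' => by rw [R1_hi a₁ j (by omega)]; ring)]
    simp only [nsmul_eq_mul]
    push_cast
    ring
  have e22 : hermInner r2 r2 = 1 + (a₁ : F4) + a₃ + a₄ + a₅ := by
    rw [herm_eq_range r2 r2 (fun j => R2 a₁ a₂ a₃ a₄ j * (R2 a₁ a₂ a₃ a₄ j) ^ 2) (fun i => rfl),
      hn, sum_eval a₁ a₂ a₃ a₄ a₅ _ 0 1 0 1 1 1
        (by norm_num [R2])
        (fun j h h' => by rw [R2_1 a₁ a₂ a₃ a₄ j h h']; ring)
        (fun j h h' => by rw [R2_2 a₁ a₂ a₃ a₄ j h h']; ring)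
        (fun j h h' => by rw [R2_3 a₁ a₂ a₃ a₄ j h h']; ring)
        (fun j h h' => by rw [R2_4 a₁ a₂ a₃ a₄ j h h']; linear_combination ω4_cube)
        (fun j h h' => by rw [R2_5 a₁ a₂ a₃ a₄ j h]; linear_combination (ω4 ^ 3 + 1) * ω4_cube)]
    simp only [nsmul_eq_mul]
    push_cast
    ring
  have e12 : hermInner r1 r2 = (a₃ : F4) + (a₄ : F4) * ω4 ^ 2 + (a₅ : F4) * ω4 := by
    rw [herm_eq_range r1 r2 (fun j => R1 a₁ j * (R2 a₁ a₂ a₃ a₄ j) ^ 2) (fun i => rfl), hn,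
      sum_eval a₁ a₂ a₃ a₄ a₅ _ 0 0 0 1 (ω4 ^ 2) ω4
        (by norm_num [R1, R2])
        (fun j h h' => by rw [R1_mid a₁ j h h']; ring)
        (fun j h h' => by rw [R1_hi a₁ j (by omega), R2_2 a₁ a₂ a₃ a₄ j h h']; ring)
        (fun j h h' => by rw [R1_hi a₁ j (by omega), R2_3 a₁ a₂ a₃ a₄ j h h']; ring)
        (fun j h h' => by rw [R1_hi a₁ j (by omega), R2_4 a₁ a₂ a₃ a₄ j h h']; ring)
        (fun j h h' => by rw [R1_hi a₁ j (by omega), R2_5 a₁ a₂ a₃ a₄ j h]; linear_combination ω4 * ω4_cube)]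
    simp only [nsmul_eq_mul]
    push_cast
    ring
  have e21 : hermInner r2 r1 = (a₃ : F4) + (a₄ : F4) * ω4 + (a₅ : F4) * ω4 ^ 2 := by
    rw [herm_eq_range r2 r1 (fun j => R2 a₁ a₂ a₃ a₄ j * (R1 a₁ j) ^ 2) (fun i => rfl), hn,
      sum_eval a₁ a₂ a₃ a₄ a₅ _ 0 0 0 1 ω4 (ω4 ^ 2)
        (by norm_num [R1, R2])
        (fun j h h' => by rw [R2_1 a₁ a₂ a₃ a₄ j h h', R1_mid a₁ j h h']; ring)
        (fun j h h' => by rw [R2_2 a₁ a₂ a₃ a₄ j h h']; ring)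
        (fun j h h' => by rw [R2_3 a₁ a₂ a₃ a₄ j h h', R1_hi a₁ j (by omega)]; ring)
        (fun j h h' => by rw [R2_4 a₁ a₂ a₃ a₄ j h h', R1_hi a₁ j (by omega)]; ring)
        (fun j h h' => by rw [R2_5 a₁ a₂ a₃ a₄ j h, R1_hi a₁ j (by omega)]; ring)]
    simp only [nsmul_eq_mul]
    push_cast
    ring
  -- the determinant of the Gram matrix
  have hdc : (1 : F4) + (a₂ : F4) + a₃ + a₄ + a₅ = (d : F4) := by
    rw [← hd]; push_cast; ring
  have hDelta : hermInner r1 r1 * hermInner r2 r2 - hermInner r1 r2 * hermInner r2 r1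
      = ((d * (1 + a₁ + a₃ + a₄ + a₅)
          + (a₃ * a₃ + a₄ * a₄ + a₅ * a₅ + a₃ * a₄ + a₄ * a₅ + a₅ * a₃) : ℕ) : F4) := by
    rw [e11, e12, e21, e22]
    push_cast
    linear_combination ((1 : F4) + (a₁ : F4) + a₃ + a₄ + a₅) * hdc
      - (((a₃ : F4) * a₄ + (a₃ : F4) * a₅ + (a₄ : F4) * a₅)
          + ((a₄ : F4) ^ 2 + (a₅ : F4) ^ 2) * (ω4 - 1)
          + (a₄ : F4) * a₅ * ω4 * (ω4 - 1)) * ω4_spec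
      - ((a₃ : F4) ^ 2 + (a₄ : F4) ^ 2 + (a₅ : F4) ^ 2) * F4two
  -- membership criteria
  have memC : ∀ x : Fin n → F4, x ∈ Ccode n a₁ a₂ a₃ a₄ a₅ ↔
      ∃ α β : F4, α • r1 + β • r2 = x := by
    intro x; rw [hC, Submodule.mem_span_pair]
  have memD : ∀ x : Fin n → F4, x ∈ hermDual (Ccode n a₁ a₂ a₃ a₄ a₅) ↔
      (hermInner x r1 = 0 ∧ hermInner x r2 = 0) := by
    intro x
    constructor
    · intro hx
      exact ⟨hx r1 hr1C, hx r2 hr2C⟩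
    · rintro ⟨hx1, hx2⟩ y hy
      rw [hC, Submodule.mem_span_pair] at hy
      obtain ⟨α, β, rfl⟩ := hy
      rw [hermInner_right, hx1, hx2]
      ring
  -- LCD iff nonzero determinant
  have main : IsHermLCD (Ccode n a₁ a₂ a₃ a₄ a₅) ↔
      hermInner r1 r1 * hermInner r2 r2 - hermInner r1 r2 * hermInner r2 r1 ≠ 0 := by
    constructor
    · intro hlcd hΔ0
      unfold IsHermLCD at hlcd
      obtain ⟨α, β, hαβ, hx1, hx2⟩ : ∃ α β : F4, ¬(α = 0 ∧ β = 0) ∧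
          α * hermInner r1 r1 + β * hermInner r2 r1 = 0 ∧
          α * hermInner r1 r2 + β * hermInner r2 r2 = 0 := by
        by_cases h1 : hermInner r1 r1 = 0 ∧ hermInner r2 r1 = 0
        · by_cases h2 : hermInner r1 r2 = 0 ∧ hermInner r2 r2 = 0
          · exact ⟨1, 0, by simp, by rw [h1.1]; ring, by rw [h2.1]; ring⟩
          · refine ⟨hermInner r2 r2, hermInner r1 r2, fun hc => h2 ⟨hc.2, hc.1⟩, ?_, ?_⟩
            · rw [h1.1, h1.2]; ring
            · linear_combination (hermInner r1 r2 * hermInner r2 r2) * F4two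
        · refine ⟨hermInner r2 r1, hermInner r1 r1, fun hc => h1 ⟨hc.2, hc.1⟩, ?_, ?_⟩
          · linear_combination (hermInner r1 r1 * hermInner r2 r1) * F4two
          · linear_combination hΔ0 + (hermInner r1 r2 * hermInner r2 r1) * F4two
      have hxC : α • r1 + β • r2 ∈ Ccode n a₁ a₂ a₃ a₄ a₅ := (memC _).mpr ⟨α, β, rfl⟩
      have hxD : α • r1 + β • r2 ∈ hermDual (Ccode n a₁ a₂ a₃ a₄ a₅) := by
        refine (memD _).mpr ⟨?_, ?_⟩
        · rw [hermInner_add_left, hermInner_smul_left, hermInner_smul_left]; exact hx1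
        · rw [hermInner_add_left, hermInner_smul_left, hermInner_smul_left]; exact hx2
      have hx0 : α • r1 + β • r2 = 0 := by
        have hm : α • r1 + β • r2 ∈ (⊥ : Submodule F4 (Fin n → F4)) := by
          rw [← hlcd]
          exact Submodule.mem_inf.mpr ⟨hxC, hxD⟩
        simpa using hm
      exact hαβ ⟨(hind α β hx0).1, (hind α β hx0).2⟩
    · intro hne
      unfold IsHermLCD
      rw [Submodule.eq_bot_iff]
      intro x hx
      obtain ⟨hxC, hxD⟩ := Submodule.mem_inf.mp hx
      obtain ⟨α, β, rfl⟩ := (memC x).mp hxC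
      obtain ⟨hx1, hx2⟩ := (memD _).mp hxD
      rw [hermInner_add_left, hermInner_smul_left, hermInner_smul_left] at hx1 hx2
      have hα : α = 0 := by
        have h := mul_eq_zero.mp (show α * (hermInner r1 r1 * hermInner r2 r2
            - hermInner r1 r2 * hermInner r2 r1) = 0 by
          linear_combination (hermInner r2 r2) * hx1 - (hermInner r2 r1) * hx2)
        exact h.resolve_right hne
      have hβ : β = 0 := by
        have h := mul_eq_zero.mp (show β * (hermInner r1 r1 * hermInner r2 r2
            - hermInner r1 r2 * hermInner r2 r1) = 0 by
          linear_combination (hermInner r1 r1) * hx2 - (hermInner r1 r2) * hx1)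
        exact h.resolve_right hne
      rw [hα, hβ]
      simp
  -- weight computations
  have wt2 : wt r2 = (1 + a₁) + a₃ + a₄ + a₅ := by
    rw [wt_eq_range r2 (R2 a₁ a₂ a₃ a₄) (fun i => rfl), hn,
      sum_eval a₁ a₂ a₃ a₄ a₅ _ 0 1 0 1 1 1
        (by norm_num [R2])
        (fun j h h' => by rw [R2_1 a₁ a₂ a₃ a₄ j h h', if_pos one_ne_zero])
        (fun j h h' => by rw [R2_2 a₁ a₂ a₃ a₄ j h h', if_neg (not_not_intro rfl)])
        (fun j h h' => by rw [R2_3 a₁ a₂ a₃ a₄ j h h', if_pos one_ne_zero])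
        (fun j h h' => by rw [R2_4 a₁ a₂ a₃ a₄ j h h', if_pos ω4_ne_zero])
        (fun j h h' => by rw [R2_5 a₁ a₂ a₃ a₄ j h, if_pos f2sq])]
    simp only [smul_eq_mul]
    omega
  have wtu : wt (r1 + r2) = 1 + (1 + a₁) + a₂ + a₄ + a₅ := by
    rw [wt_eq_range (r1 + r2) (fun j => R1 a₁ j + R2 a₁ a₂ a₃ a₄ j) (fun i => rfl), hn,
      sum_eval a₁ a₂ a₃ a₄ a₅ _ 1 1 1 0 1 1
        (by norm_num [R1, R2])
        (fun j h h' => by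
          rw [R1_mid a₁ j h h', R2_1 a₁ a₂ a₃ a₄ j h h']
          rw [zero_add, if_pos one_ne_zero])
        (fun j h h' => by
          rw [R1_hi a₁ j (by omega), R2_2 a₁ a₂ a₃ a₄ j h h']
          rw [add_zero, if_pos one_ne_zero])
        (fun j h h' => by
          rw [R1_hi a₁ j (by omega), R2_3 a₁ a₂ a₃ a₄ j h h']
          rw [if_neg (not_not_intro f1fact)])
        (fun j h h' => by
          rw [R1_hi a₁ j (by omega), R2_4 a₁ a₂ a₃ a₄ j h h']
          rw [if_pos one_add_ω4_ne])
        (fun j h h' => by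
          rw [R1_hi a₁ j (by omega), R2_5 a₁ a₂ a₃ a₄ j h]
          rw [if_pos one_add_ω4sq_ne])]
    simp only [smul_eq_mul]
    omega
  have wtv : wt (r1 + ω4 • r2) = 1 + (1 + a₁) + a₂ + a₃ + a₄ := by
    rw [wt_eq_range (r1 + ω4 • r2) (fun j => R1 a₁ j + ω4 * R2 a₁ a₂ a₃ a₄ j)
        (fun i => by rw [Pi.add_apply, Pi.smul_apply, smul_eq_mul]; rfl), hn,
      sum_eval a₁ a₂ a₃ a₄ a₅ _ 1 1 1 1 1 0
        (by norm_num [R1, R2])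
        (fun j h h' => by
          rw [R1_mid a₁ j h h', R2_1 a₁ a₂ a₃ a₄ j h h']
          rw [mul_one, zero_add, if_pos ω4_ne_zero])
        (fun j h h' => by
          rw [R1_hi a₁ j (by omega), R2_2 a₁ a₂ a₃ a₄ j h h']
          rw [mul_zero, add_zero, if_pos one_ne_zero])
        (fun j h h' => by
          rw [R1_hi a₁ j (by omega), R2_3 a₁ a₂ a₃ a₄ j h h']
          rw [mul_one, if_pos one_add_ω4_ne])
        (fun j h h' => by
          rw [R1_hi a₁ j (by omega), R2_4 a₁ a₂ a₃ a₄ j h h']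
          rw [if_pos f6fact])
        (fun j h h' => by
          rw [R1_hi a₁ j (by omega), R2_5 a₁ a₂ a₃ a₄ j h]
          rw [if_neg (not_not_intro f5fact)])]
    simp only [smul_eq_mul]
    omega
  have wtw : wt (r1 + ω4 ^ 2 • r2) = 1 + (1 + a₁) + a₂ + a₃ + a₅ := by
    rw [wt_eq_range (r1 + ω4 ^ 2 • r2) (fun j => R1 a₁ j + ω4 ^ 2 * R2 a₁ a₂ a₃ a₄ j)
        (fun i => by rw [Pi.add_apply, Pi.smul_apply, smul_eq_mul]; rfl), hn,
      sum_eval a₁ a₂ a₃ a₄ a₅ _ 1 1 1 1 0 1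
        (by norm_num [R1, R2])
        (fun j h h' => by
          rw [R1_mid a₁ j h h', R2_1 a₁ a₂ a₃ a₄ j h h']
          rw [mul_one, zero_add, if_pos f2sq])
        (fun j h h' => by
          rw [R1_hi a₁ j (by omega), R2_2 a₁ a₂ a₃ a₄ j h h']
          rw [mul_zero, add_zero, if_pos one_ne_zero])
        (fun j h h' => by
          rw [R1_hi a₁ j (by omega), R2_3 a₁ a₂ a₃ a₄ j h h']
          rw [mul_one, if_pos one_add_ω4sq_ne])
        (fun j h h' => by
          rw [R1_hi a₁ j (by omega), R2_4 a₁ a₂ a₃ a₄ j h h']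
          rw [if_neg (not_not_intro f7fact)])
        (fun j h h' => by
          rw [R1_hi a₁ j (by omega), R2_5 a₁ a₂ a₃ a₄ j h]
          rw [if_pos f8fact])]
    simp only [smul_eq_mul]
    omega
  -- the resulting inequalities
  have hr2ne : r2 ≠ 0 := by
    intro h
    have e : R2 a₁ a₂ a₃ a₄ 1 = (0 : F4) := congrFun h ⟨1, by omega⟩
    rw [R2_1 a₁ a₂ a₃ a₄ 1 le_rfl (by omega)] at e
    exact one_ne_zero e
  have hune : r1 + r2 ≠ 0 := by
    intro h
    have e : R1 a₁ 0 + R2 a₁ a₂ a₃ a₄ 0 = (0 : F4) := congrFun h ⟨0, by omega⟩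
    norm_num [R1, R2] at e
  have hvne : r1 + ω4 • r2 ≠ 0 := by
    intro h
    have e : R1 a₁ 0 + ω4 * R2 a₁ a₂ a₃ a₄ 0 = (0 : F4) := congrFun h ⟨0, by omega⟩
    norm_num [R1, R2] at e
  have hwne : r1 + ω4 ^ 2 • r2 ≠ 0 := by
    intro h
    have e : R1 a₁ 0 + ω4 ^ 2 * R2 a₁ a₂ a₃ a₄ 0 = (0 : F4) := congrFun h ⟨0, by omega⟩
    norm_num [R1, R2] at e
  have ha2 : a₂ ≤ a₁ := by
    have := hmin.1 r2 hr2C hr2ne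
    rw [wt2] at this
    omega
  have ha3 : a₃ ≤ 1 + a₁ := by
    have := hmin.1 (r1 + r2) (Submodule.add_mem _ hr1C hr2C) hune
    rw [wtu] at this
    omega
  have ha5 : a₅ ≤ 1 + a₁ := by
    have := hmin.1 (r1 + ω4 • r2)
      (Submodule.add_mem _ hr1C (Submodule.smul_mem _ ω4 hr2C)) hvne
    rw [wtv] at this
    omega
  have ha4 : a₄ ≤ 1 + a₁ := by
    have := hmin.1 (r1 + ω4 ^ 2 • r2)
      (Submodule.add_mem _ hr1C (Submodule.smul_mem _ (ω4 ^ 2) hr2C)) hwne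
    rw [wtw] at this
    omega
  -- final assembly
  have hb₃' : b₃ = 1 + (a₁ : ℤ) - a₃ := by omega
  have hb₄' : b₄ = 1 + (a₁ : ℤ) - a₄ := by omega
  have hb₅' : b₅ = 1 + (a₁ : ℤ) - a₅ := by omega
  have hpar := parity_final a₁ a₃ a₄ a₅ d b₃ b₄ b₅ hb₃' hb₄' hb₅'
  rw [main, hDelta, Ne, CharP.cast_eq_zero_iff F4 2]
  constructor
  · intro hne
    obtain ⟨hpe, hpo⟩ := hpar.mp (by omega)
    exact ⟨by omega, by omega, by omega, by omega, by omega, hpe, hpo⟩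
  · rintro ⟨-, -, -, -, -, hpe, hpo⟩
    have := hpar.mpr ⟨hpe, hpo⟩
    omega
end

section
/- For every integer m ≥ 0, there exists an optimal Hermitian LCD quaternary [5m+2, 2, 4m+1] code, and any two optimal Hermitian LCD [5m+2, 2, 4m+1] codes are equivalent. -/
open Finset

/-!
Fix generators `g₁, g₂` of a two-dimensional code. The codeword `x₁ • g₁ + x₂ • g₂` vanishes
exactly at the coordinates whose column `(g₁ i, g₂ i)` is orthogonal to `x` for the bilinear
pairing, so the weights are governed by how the columns spread over the five points of the
projective line over `F₄`. For length `5m + 2` and minimum distance `4m + 1` every point is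
orthogonal to at most `m + 1` columns and no column is zero, so at least two points reach `m + 1`;
a change of generators moves them to two fixed points. The Hermitian Gram determinant depends
only on these counts, and it is nonzero exactly when the other three points are orthogonal to
`m` columns each. Codes with nonzero columns and the same counts are monomially equivalent, and
`C(m, m, m, m, m)` realises the counts.
-/

namespace F4

lemma pow_four (x : F4) : x ^ 4 = x := by
  simpa [card_eq] using FiniteField.pow_card x

lemma pow_three_of_ne_zero {x : F4} (hx : x ≠ 0) : x ^ 3 = 1 := by
  have := pow_four x
  grind

lemma eq_zero_or_eq_one_or_eq_ω4_or_eq_ω4_sq (x : F4) :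
    x = 0 ∨ x = 1 ∨ x = ω4 ∨ x = ω4 ^ 2 := by
  have h : x * (x - 1) * (x - ω4) * (x - ω4 ^ 2) = 0 := by
    have := pow_four x
    have := ω4_spec
    grind
  simpa [mul_eq_zero, sub_eq_zero, or_assoc] using h

end F4

namespace QuaternaryCode

open scoped Classical Matrix

lemma exists_ne_eq_succ_of_le_sum {ι : Type*} [Fintype ι] {f : ι → ℕ} {b : ℕ}
    (hf : ∀ i, f i ≤ b + 1) (hsum : Fintype.card ι * b + 2 ≤ ∑ i, f i) :
    ∃ i j, i ≠ j ∧ f i = b + 1 ∧ f j = b + 1 := by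
  have hle : ∑ i, f i ≤ ∑ i, (b + if f i = b + 1 then 1 else 0) :=
    sum_le_sum fun i _ => by have := hf i; split_ifs <;> omega
  rw [sum_add_distrib, sum_const, card_univ, smul_eq_mul, sum_boole, Nat.cast_id] at hle
  have : 1 < #{i | f i = b + 1} := by linarith
  obtain ⟨i, hi, j, hj, hij⟩ := one_lt_card.1 this
  exact ⟨i, j, hij, (mem_filter.1 hi).2, (mem_filter.1 hj).2⟩

/-- Representatives of the five points of the projective line over `F₄`; `perp j` is the index
of the point orthogonal to `point j` for the bilinear pairing `dot`. -/
noncomputable def point : Fin 5 → F4 × F4 := ![(1, 0), (0, 1), (1, 1), (1, ω4), (1, ω4 ^ 2)]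

noncomputable def dot (x c : F4 × F4) : F4 := x.1 * c.1 + x.2 * c.2

def perp : Fin 5 → Fin 5 := ![1, 0, 2, 4, 3]

lemma perp_perp (j : Fin 5) : perp (perp j) = j := by
  fin_cases j <;> rfl

lemma dot_smul_left (x c : F4 × F4) (l : F4) : dot (l • x) c = l * dot x c := by
  simp only [dot, Prod.smul_fst, Prod.smul_snd, smul_eq_mul]
  ring

lemma dot_smul_right (x c : F4 × F4) (l : F4) : dot x (l • c) = l * dot x c := by
  simp only [dot, Prod.smul_fst, Prod.smul_snd, smul_eq_mul]
  ring

lemma dot_point_eq_zero_iff (j k : Fin 5) : dot (point j) (point k) = 0 ↔ k = perp j := by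
  have := ω4_spec
  fin_cases j <;> fin_cases k <;> simp [dot, point, perp] <;> grind

lemma point_ne_zero (j : Fin 5) : point j ≠ 0 := by
  fin_cases j <;> simp [point, Prod.ext_iff]

lemma point_det_ne_zero {j k : Fin 5} (hjk : j ≠ k) :
    (point j).1 * (point k).2 - (point j).2 * (point k).1 ≠ 0 := by
  have := ω4_spec
  fin_cases j <;> fin_cases k <;> simp_all [point] <;> grind

lemma exists_eq_smul_point {c : F4 × F4} (hc : c ≠ 0) :
    ∃ l : F4, l ≠ 0 ∧ ∃ k, c = l • point k := by
  by_cases h₁ : c.1 = 0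
  · refine ⟨c.2, fun h₂ => hc (Prod.ext h₁ h₂), 1, Prod.ext ?_ ?_⟩ <;> simp [point, h₁]
  · have hc₂ : c.2 = c.1 * (c.2 / c.1) := by field_simp
    refine ⟨c.1, h₁, ?_⟩
    rcases F4.eq_zero_or_eq_one_or_eq_ω4_or_eq_ω4_sq (c.2 / c.1) with h | h | h | h <;>
      rw [h] at hc₂
    exacts [⟨0, Prod.ext (by simp [point]) (by simp [point, hc₂])⟩,
      ⟨2, Prod.ext (by simp [point]) (by simp [point, hc₂])⟩,
      ⟨3, Prod.ext (by simp [point]) (by simp [point, hc₂])⟩,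
      ⟨4, Prod.ext (by simp [point]) (by simp [point, hc₂])⟩]

lemma dot_point_eq_zero_iff_of_eq_smul {c : F4 × F4} {l : F4} {k : Fin 5} (hl : l ≠ 0)
    (hc : c = l • point k) (j : Fin 5) : dot (point j) c = 0 ↔ j = perp k := by
  rw [hc, dot_smul_right, mul_eq_zero, or_iff_right hl, dot_point_eq_zero_iff]
  exact ⟨fun h => by rw [h, perp_perp], fun h => by rw [h, perp_perp]⟩

lemma card_filter_dot_point_eq_zero (c : F4 × F4) :
    #{j | dot (point j) c = 0} = if c = 0 then 5 else 1 := by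
  split_ifs with hc
  · simp [hc, dot]
  · obtain ⟨l, hl, k, rfl⟩ := exists_eq_smul_point hc
    simp [dot_point_eq_zero_iff_of_eq_smul hl rfl, filter_eq']

lemma mul_sq_eq_sum_ite (c : F4 × F4) :
    c.1 * c.2 ^ 2 = (if dot (point 2) c = 0 then 1 else 0)
      + ω4 * (if dot (point 3) c = 0 then 1 else 0)
      + ω4 ^ 2 * (if dot (point 4) c = 0 then 1 else 0) := by
  obtain ⟨a, b⟩ := c
  have := ω4_spec
  simp only [dot, point, Matrix.cons_val]
  rcases F4.eq_zero_or_eq_one_or_eq_ω4_or_eq_ω4_sq a with rfl | rfl | rfl | rfl <;>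
    rcases F4.eq_zero_or_eq_one_or_eq_ω4_or_eq_ω4_sq b with rfl | rfl | rfl | rfl <;> grind

section

variable {n : ℕ}

noncomputable def zeroCount (g₁ g₂ : Fin n → F4) (x : F4 × F4) : ℕ :=
  #{i | dot x (g₁ i, g₂ i) = 0}

lemma zeroCount_add_wt (g₁ g₂ : Fin n → F4) (x : F4 × F4) :
    zeroCount g₁ g₂ x + wt (x.1 • g₁ + x.2 • g₂) = n := by
  have h := card_filter_add_card_filter_not (s := univ) (fun i => dot x (g₁ i, g₂ i) = 0)
  rw [card_univ, Fintype.card_fin] at h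
  convert h using 2 <;>
    simp only [zeroCount, wt, dot, Pi.add_apply, Pi.smul_apply, smul_eq_mul, ne_eq]
  congr

lemma zeroCount_smul (g₁ g₂ : Fin n → F4) (x : F4 × F4) {l : F4} (hl : l ≠ 0) :
    zeroCount g₁ g₂ (l • x) = zeroCount g₁ g₂ x := by
  simp [zeroCount, dot_smul_left, hl]

lemma zeroCount_smul_add_smul (g₁ g₂ : Fin n → F4) (p q r s : F4) (x : F4 × F4) :
    zeroCount (p • g₁ + q • g₂) (r • g₁ + s • g₂) x
      = zeroCount g₁ g₂ (x.1 * p + x.2 * r, x.1 * q + x.2 * s) := by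
  unfold zeroCount
  congr 1
  refine filter_congr fun i _ => ?_
  simp only [dot, Pi.add_apply, Pi.smul_apply, smul_eq_mul]
  ring_nf

lemma sum_zeroCount_point (g₁ g₂ : Fin n → F4) :
    ∑ j, zeroCount g₁ g₂ (point j) = n + 4 * #{i | (g₁ i, g₂ i) = 0} := by
  simp only [zeroCount, card_filter]
  rw [sum_comm]
  simp only [← card_filter, card_filter_dot_point_eq_zero]
  have h : ∀ c : F4 × F4, (if c = 0 then 5 else 1 : ℕ) = 1 + 4 * if c = 0 then 1 else 0 :=
    fun c => by split_ifs <;> rfl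
  rw [sum_congr rfl fun i _ => h (g₁ i, g₂ i), sum_add_distrib, ← mul_sum, ← card_filter]
  simp

lemma card_filter_eq_zeroCount {g₁ g₂ l : Fin n → F4} {k : Fin n → Fin 5} (hl : ∀ i, l i ≠ 0)
    (hk : ∀ i, (g₁ i, g₂ i) = l i • point (k i)) (t : Fin 5) :
    #{i | k i = t} = zeroCount g₁ g₂ (point (perp t)) := by
  unfold zeroCount
  congr 1
  refine filter_congr fun i _ => ?_
  rw [dot_point_eq_zero_iff_of_eq_smul (hl i) (hk i)]
  exact ⟨fun h => by rw [h], fun h => by rw [← perp_perp t, h, perp_perp]⟩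

lemma hermInner_smul_add_smul_left (u v w : Fin n → F4) (x y : F4) :
    hermInner (x • u + y • v) w = x * hermInner u w + y * hermInner v w := by
  simp only [hermInner, Pi.add_apply, Pi.smul_apply, smul_eq_mul, mul_sum, ← sum_add_distrib]
  exact sum_congr rfl fun i _ => by ring

lemma hermInner_smul_add_smul_right (u v w : Fin n → F4) (x y : F4) :
    hermInner w (x • u + y • v) = x ^ 2 * hermInner w u + y ^ 2 * hermInner w v := by
  simp only [hermInner, Pi.add_apply, Pi.smul_apply, smul_eq_mul, mul_sum, ← sum_add_distrib]
  exact sum_congr rfl fun i _ => by grind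

lemma hermInner_swap (u v : Fin n → F4) : hermInner v u = hermInner u v ^ 2 := by
  rw [hermInner, hermInner, sum_pow_char]
  exact sum_congr rfl fun i _ => by have := F4.pow_four (v i); grind

lemma hermInner_self (g : Fin n → F4) : hermInner g g = n - #{i | g i = 0} := by
  have h : ∀ x : F4, x * x ^ 2 = 1 - if x = 0 then 1 else 0 := fun x => by
    split_ifs with hx
    · simp [hx]
    · rw [sub_zero, ← pow_succ', F4.pow_three_of_ne_zero hx]
  simp [hermInner, h, sum_sub_distrib, sum_boole]

/-- Arranged so that `gram g₁ g₂ *ᵥ ![x, y]` lists the inner products of `x • g₁ + y • g₂`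
with `g₁` and `g₂`. -/
noncomputable def gram (g₁ g₂ : Fin n → F4) : Matrix (Fin 2) (Fin 2) F4 :=
  !![hermInner g₁ g₁, hermInner g₂ g₁; hermInner g₁ g₂, hermInner g₂ g₂]

lemma det_gram (g₁ g₂ : Fin n → F4) :
    (gram g₁ g₂).det
      = (n - zeroCount g₁ g₂ (point 0)) * (n - zeroCount g₁ g₂ (point 1))
        - (zeroCount g₁ g₂ (point 2) + ω4 * zeroCount g₁ g₂ (point 3)
          + ω4 ^ 2 * zeroCount g₁ g₂ (point 4)) ^ 3 := by
  have h₁₂ : hermInner g₁ g₂ = zeroCount g₁ g₂ (point 2) + ω4 * zeroCount g₁ g₂ (point 3)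
      + ω4 ^ 2 * zeroCount g₁ g₂ (point 4) := by
    simp only [hermInner, fun i => mul_sq_eq_sum_ite (g₁ i, g₂ i), sum_add_distrib, ← mul_sum,
      sum_boole, zeroCount]
  have h₀ : zeroCount g₁ g₂ (point 0) = #{i | g₁ i = 0} := by simp [zeroCount, dot, point]
  have h₁ : zeroCount g₁ g₂ (point 1) = #{i | g₂ i = 0} := by simp [zeroCount, dot, point]
  rw [gram, Matrix.det_fin_two_of, hermInner_swap g₁ g₂, hermInner_self, hermInner_self, h₀, h₁,
    h₁₂]
  ring

structure IsGenPair (C : Submodule F4 (Fin n → F4)) (g₁ g₂ : Fin n → F4) : Prop where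
  linearIndependent : LinearIndependent F4 ![g₁, g₂]
  span_eq : C = Submodule.span F4 {g₁, g₂}

lemma exists_isGenPair {C : Submodule F4 (Fin n → F4)} (hC : Module.finrank F4 C = 2) :
    ∃ g₁ g₂, IsGenPair C g₁ g₂ := by
  let b := Module.finBasisOfFinrankEq F4 C hC
  have hb : ![(b 0 : Fin n → F4), b 1] = C.subtype ∘ b := by
    ext j : 1
    fin_cases j <;> rfl
  refine ⟨b 0, b 1, ?_, ?_⟩
  · rw [hb]
    exact b.linearIndependent.map' C.subtype C.ker_subtype
  · rw [← Matrix.range_cons_cons_empty, hb, Set.range_comp, ← Submodule.map_span, b.span_eq,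
      Submodule.map_subtype_top]

namespace IsGenPair

variable {C : Submodule F4 (Fin n → F4)} {g₁ g₂ : Fin n → F4}

lemma finrank_eq_two (h : IsGenPair C g₁ g₂) : Module.finrank F4 C = 2 := by
  rw [h.span_eq, ← Matrix.range_cons_cons_empty, finrank_span_eq_card h.linearIndependent,
    Fintype.card_fin]

lemma mem_iff (h : IsGenPair C g₁ g₂) {v : Fin n → F4} :
    v ∈ C ↔ ∃ x y : F4, x • g₁ + y • g₂ = v := by
  rw [h.span_eq, Submodule.mem_span_pair]

lemma smul_add_smul_mem (h : IsGenPair C g₁ g₂) (x y : F4) : x • g₁ + y • g₂ ∈ C :=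
  h.mem_iff.2 ⟨x, y, rfl⟩

lemma smul_add_smul_ne_zero (h : IsGenPair C g₁ g₂) {x : F4 × F4} (hx : x ≠ 0) :
    x.1 • g₁ + x.2 • g₂ ≠ 0 := fun h₀ =>
  hx (Prod.ext_iff.2 (LinearIndependent.pair_iff.1 h.linearIndependent _ _ h₀))

lemma smul_add_smul (h : IsGenPair C g₁ g₂) {p q r s : F4} (hdet : p * s - q * r ≠ 0) :
    IsGenPair C (p • g₁ + q • g₂) (r • g₁ + s • g₂) := by
  refine ⟨LinearIndependent.pair_iff.2 fun x y hxy => ?_, ?_⟩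
  · obtain ⟨h₁, h₂⟩ := LinearIndependent.pair_iff.1 h.linearIndependent
      (x * p + y * r) (x * q + y * s) (by rw [← hxy]; module)
    grind
  · rw [h.span_eq]
    apply le_antisymm <;> rw [Submodule.span_le] <;> rintro v (rfl | rfl) <;>
      rw [SetLike.mem_coe, Submodule.mem_span_pair]
    · exact ⟨s / (p * s - q * r), -q / (p * s - q * r), by match_scalars <;> grind⟩
    · exact ⟨-r / (p * s - q * r), p / (p * s - q * r), by match_scalars <;> grind⟩
    · exact ⟨p, q, rfl⟩
    · exact ⟨r, s, rfl⟩

lemma mem_hermDual_iff (h : IsGenPair C g₁ g₂) {v : Fin n → F4} :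
    v ∈ hermDual C ↔ hermInner v g₁ = 0 ∧ hermInner v g₂ = 0 := by
  refine ⟨fun hv => ⟨hv g₁ (by simpa using h.smul_add_smul_mem 1 0),
    hv g₂ (by simpa using h.smul_add_smul_mem 0 1)⟩, fun ⟨h₁, h₂⟩ w hw => ?_⟩
  obtain ⟨x, y, rfl⟩ := h.mem_iff.1 hw
  simp [hermInner_smul_add_smul_right, h₁, h₂]

lemma isHermLCD_iff (h : IsGenPair C g₁ g₂) : IsHermLCD C ↔ (gram g₁ g₂).det ≠ 0 := by
  have hdual : ∀ x y : F4, x • g₁ + y • g₂ ∈ hermDual C ↔ gram g₁ g₂ *ᵥ ![x, y] = 0 := by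
    intro x y
    simp [h.mem_hermDual_iff, hermInner_smul_add_smul_left, gram, funext_iff, Fin.forall_fin_two]
  rw [IsHermLCD, Ne, ← Matrix.exists_mulVec_eq_zero_iff, ← not_iff_not, not_not,
    ← Ne, Submodule.ne_bot_iff]
  constructor
  · rintro ⟨w, hw, hw₀⟩
    obtain ⟨x, y, rfl⟩ := h.mem_iff.1 (Submodule.mem_inf.1 hw).1
    refine ⟨![x, y], fun h₀ => hw₀ ?_, (hdual x y).1 (Submodule.mem_inf.1 hw).2⟩
    simp [funext_iff, Fin.forall_fin_two] at h₀
    simp [h₀]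
  · rintro ⟨v, hv₀, hv⟩
    have hv' : ![v 0, v 1] = v := by ext j; fin_cases j <;> rfl
    refine ⟨v 0 • g₁ + v 1 • g₂, Submodule.mem_inf.2 ⟨h.smul_add_smul_mem _ _, ?_⟩,
      h.smul_add_smul_ne_zero (x := (v 0, v 1)) ?_⟩
    · rwa [hdual, hv']
    · simpa [Prod.ext_iff, funext_iff, Fin.forall_fin_two] using hv₀

lemma le_wt_iff (h : IsGenPair C g₁ g₂) (d : ℕ) :
    (∀ x ∈ C, x ≠ 0 → d ≤ wt x) ↔ ∀ j, zeroCount g₁ g₂ (point j) + d ≤ n := by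
  constructor
  · intro hd j
    have := hd _ (h.smul_add_smul_mem _ _) (h.smul_add_smul_ne_zero (point_ne_zero j))
    have := zeroCount_add_wt g₁ g₂ (point j)
    omega
  · rintro hd v hv hv₀
    obtain ⟨x, y, rfl⟩ := h.mem_iff.1 hv
    obtain ⟨l, hl, k, hxy⟩ := exists_eq_smul_point (c := (x, y))
      fun h₀ => hv₀ (by simp_all [Prod.ext_iff])
    have : zeroCount g₁ g₂ (x, y) + wt (x • g₁ + y • g₂) = n := zeroCount_add_wt g₁ g₂ (x, y)
    have : zeroCount g₁ g₂ (x, y) = zeroCount g₁ g₂ (point k) := by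
      rw [hxy, zeroCount_smul _ _ _ hl]
    have := hd k
    omega

lemma hasMinWeight_of_zeroCount_point (h : IsGenPair C g₁ g₂) {d : ℕ}
    (hd : ∀ j, zeroCount g₁ g₂ (point j) + d ≤ n) (j : Fin 5)
    (hj : zeroCount g₁ g₂ (point j) + d = n) : hasMinWeight C d := by
  refine ⟨(h.le_wt_iff d).2 hd, _, h.smul_add_smul_mem (point j).1 (point j).2,
    h.smul_add_smul_ne_zero (point_ne_zero j), ?_⟩
  have := zeroCount_add_wt g₁ g₂ (point j)
  omega

/-- The new generators are chosen so that, under the substitution of `zeroCount_smul_add_smul`,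
`point 3` becomes `point j` and `point 4` becomes `point k`. -/
lemma exists_zeroCount_point_three_four (h : IsGenPair C g₁ g₂) {j k : Fin 5} (hjk : j ≠ k) :
    ∃ g₁' g₂', IsGenPair C g₁' g₂' ∧ zeroCount g₁' g₂' (point 3) = zeroCount g₁ g₂ (point j)
      ∧ zeroCount g₁' g₂' (point 4) = zeroCount g₁ g₂ (point k) := by
  obtain ⟨⟨y₁, y₂⟩, hy⟩ : ∃ y, y = point j := ⟨_, rfl⟩
  obtain ⟨⟨z₁, z₂⟩, hz⟩ : ∃ z, z = point k := ⟨_, rfl⟩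
  have hdet := point_det_ne_zero hjk
  rw [← hy, ← hz] at hdet
  have := ω4_spec
  refine ⟨_, _, h.smul_add_smul (p := ω4 ^ 2 * y₁ + ω4 * z₁) (q := ω4 ^ 2 * y₂ + ω4 * z₂)
    (r := y₁ + z₁) (s := y₂ + z₂) (by grind), ?_, ?_⟩
  · rw [zeroCount_smul_add_smul, ← hy]
    congr 1
    ext <;> simp [point] <;> grind
  · rw [zeroCount_smul_add_smul, ← hz]
    congr 1
    ext <;> simp [point] <;> grind

lemma codeEquiv {C' : Submodule F4 (Fin n → F4)} {g₁' g₂' : Fin n → F4}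
    (h : IsGenPair C g₁ g₂) (h' : IsGenPair C' g₁' g₂') (hnz : ∀ i, (g₁ i, g₂ i) ≠ 0)
    (hnz' : ∀ i, (g₁' i, g₂' i) ≠ 0)
    (hz : ∀ j, zeroCount g₁ g₂ (point j) = zeroCount g₁' g₂' (point j)) : codeEquiv C C' := by
  choose l hl k hk using fun i => exists_eq_smul_point (hnz i)
  choose l' hl' k' hk' using fun i => exists_eq_smul_point (hnz' i)
  have hcard : ∀ t, Fintype.card {i // k' i = t} = Fintype.card {i // k i = t} := fun t => by
    rw [Fintype.card_subtype, Fintype.card_subtype, card_filter_eq_zeroCount hl' hk',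
      card_filter_eq_zeroCount hl hk, hz]
  let σ : Equiv.Perm (Fin n) := Equiv.ofFiberEquiv fun t => Fintype.equivOfCardEq (hcard t)
  have hσ : ∀ i, k (σ i) = k' i := Equiv.ofFiberEquiv_map _
  have hcol : ∀ i, (l' i / l (σ i)) • (g₁ (σ i), g₂ (σ i)) = (g₁' i, g₂' i) := fun i => by
    rw [hk (σ i), hk' i, hσ, smul_smul, div_mul_cancel₀ _ (hl _)]
  refine ⟨σ, fun i => l' i / l (σ i), fun i => div_ne_zero (hl' i) (hl _), ?_⟩
  rw [h.span_eq, h'.span_eq, Submodule.map_span, Set.image_pair]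
  congr 3 <;> ext i
  · exact congrArg Prod.fst (hcol i)
  · exact congrArg Prod.snd (hcol i)

end IsGenPair

end

section

variable {m : ℕ} {C : Submodule F4 (Fin (5 * m + 2) → F4)} {g₁ g₂ : Fin (5 * m + 2) → F4}

namespace IsGenPair

lemma zeroCount_point_of_le_wt (h : IsGenPair C g₁ g₂)
    (hd : ∀ x ∈ C, x ≠ 0 → 4 * m + 1 ≤ wt x) :
    (∀ j, zeroCount g₁ g₂ (point j) ≤ m + 1) ∧ (∀ i, (g₁ i, g₂ i) ≠ 0)
      ∧ ∑ j, zeroCount g₁ g₂ (point j) = 5 * m + 2 := by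
  have hle : ∀ j, zeroCount g₁ g₂ (point j) ≤ m + 1 := fun j => by
    have := (h.le_wt_iff _).1 hd j
    omega
  have hsum := sum_zeroCount_point g₁ g₂
  have : ∑ j, zeroCount g₁ g₂ (point j) ≤ ∑ _j : Fin 5, (m + 1) := sum_le_sum fun j _ => hle j
  simp only [sum_const, card_univ, Fintype.card_fin, smul_eq_mul] at this
  have hzero : #{i | (g₁ i, g₂ i) = 0} = 0 := by omega
  simp only [card_eq_zero, filter_eq_empty_iff, mem_univ, true_implies] at hzero
  exact ⟨hle, hzero, by omega⟩

/-- Modulo `2` the Gram determinant is the product of the deficits `m + 1 - zⱼ` of the first two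
points, and the deficits sum to `3`. -/
lemma zeroCount_point_eq_of_isHermLCD (h : IsGenPair C g₁ g₂) (hC : IsHermLCD C)
    (hle : ∀ j, zeroCount g₁ g₂ (point j) ≤ m + 1)
    (hsum : ∑ j, zeroCount g₁ g₂ (point j) = 5 * m + 2)
    (h₃ : zeroCount g₁ g₂ (point 3) = m + 1) (h₄ : zeroCount g₁ g₂ (point 4) = m + 1) :
    ∀ j, zeroCount g₁ g₂ (point j) = ![m, m, m, m + 1, m + 1] j := by
  have hdet := h.isHermLCD_iff.1 hC
  obtain ⟨z, hz⟩ : ∃ z : Fin 5 → ℕ, ∀ j, zeroCount g₁ g₂ (point j) = z j := ⟨_, fun _ => rfl⟩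
  simp only [hz] at hle hsum h₃ h₄ ⊢
  have hcast : (gram g₁ g₂).det
      = (((5 * m + 2 - z 0 : ℤ) * (5 * m + 2 - z 1) - (z 2 - m - 1) ^ 3 : ℤ) : F4) := by
    have h₂ : (z 2 : F4) + ω4 * ((m + 1 : ℕ) : F4) + ω4 ^ 2 * ((m + 1 : ℕ) : F4)
        = z 2 - m - 1 := by
      push_cast
      linear_combination (m + 1 : F4) * ω4_spec
    simp only [det_gram, hz, h₃, h₄, h₂]
    push_cast
    ring
  rw [hcast, Ne, CharP.intCast_eq_zero_iff F4 2, Nat.cast_ofNat, ← even_iff_two_dvd] at hdet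
  simp only [Int.even_sub, Int.even_mul, Int.even_add, Int.even_pow] at hdet
  simp only [Int.even_iff] at hdet
  rw [Fin.sum_univ_five] at hsum
  have := hle 0
  have := hle 1
  have := hle 2
  intro j
  fin_cases j <;> simp <;> omega

end IsGenPair

lemma exists_isGenPair_of_isOptimalLCD (hC : IsOptimalLCD (5 * m + 2) (4 * m + 1) C) :
    ∃ g₁ g₂, IsGenPair C g₁ g₂ ∧ (∀ i, (g₁ i, g₂ i) ≠ 0)
      ∧ ∀ j, zeroCount g₁ g₂ (point j) = ![m, m, m, m + 1, m + 1] j := by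
  obtain ⟨hrank, ⟨hd, -⟩, hlcd, -⟩ := hC
  obtain ⟨g₁, g₂, hg⟩ := exists_isGenPair hrank
  obtain ⟨hle, -, hsum⟩ := hg.zeroCount_point_of_le_wt hd
  obtain ⟨j, k, hjk, hj, hk⟩ := exists_ne_eq_succ_of_le_sum hle (by simp [hsum])
  obtain ⟨g₁', g₂', hg', h₃, h₄⟩ := hg.exists_zeroCount_point_three_four hjk
  obtain ⟨hle', hnz', hsum'⟩ := hg'.zeroCount_point_of_le_wt hd
  exact ⟨g₁', g₂', hg', hnz',
    hg'.zeroCount_point_eq_of_isHermLCD hlcd hle' hsum' (h₃.trans hj) (h₄.trans hk)⟩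

end

def blockIndex (m v : ℕ) : Fin 5 :=
  if v = 0 then 0 else if v < 2 + m then 1 else if v < 2 + m + m then 0
  else if v < 2 + m + m + m then 2 else if v < 2 + m + m + m + m then 3 else 4

lemma row_eq_point (m : ℕ) (i : Fin (5 * m + 2)) :
    (row1 (5 * m + 2) m i, row2 (5 * m + 2) m m m m i) = point (blockIndex m i) := by
  simp only [row1, row2, blockIndex]
  split_ifs <;> first | omega | simp [point]

lemma card_filter_blockIndex (m : ℕ) (t : Fin 5) :
    #{v ∈ range (5 * m + 2) | blockIndex m v = t} = if t = 0 ∨ t = 1 then m + 1 else m := by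
  have hblock : ∀ s : Finset ℕ, (∀ v, v ∈ s ↔ v < 5 * m + 2 ∧ blockIndex m v = t) →
      #{v ∈ range (5 * m + 2) | blockIndex m v = t} = #s := fun s hs => by
    congr 1
    ext v
    simp [hs]
  fin_cases t
  · rw [hblock (insert 0 (Ico (2 + m) (2 + m + m))) fun v => by
      simp only [mem_insert, mem_Ico, blockIndex]; split_ifs <;> simp <;> omega]
    simp
  · rw [hblock (Ico 1 (2 + m)) fun v => by
      simp only [mem_Ico, blockIndex]; split_ifs <;> simp <;> omega]
    simp [add_comm]
  · rw [hblock (Ico (2 + m + m) (2 + m + m + m)) fun v => by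
      simp only [mem_Ico, blockIndex]; split_ifs <;> simp <;> omega]
    simp
  · rw [hblock (Ico (2 + m + m + m) (2 + m + m + m + m)) fun v => by
      simp only [mem_Ico, blockIndex]; split_ifs <;> simp <;> omega]
    simp
  · rw [hblock (Ico (2 + m + m + m + m) (5 * m + 2)) fun v => by
      simp only [mem_Ico, blockIndex]; split_ifs <;> simp <;> omega]
    simp
    omega

lemma zeroCount_row_point (m : ℕ) (j : Fin 5) :
    zeroCount (row1 (5 * m + 2) m) (row2 (5 * m + 2) m m m m) (point j)
      = if j = 0 ∨ j = 1 then m + 1 else m := by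
  have h := card_filter_blockIndex m (perp j)
  rw [card_filter, ← Fin.sum_univ_eq_sum_range, ← card_filter] at h
  rw [zeroCount]
  simp_rw [row_eq_point, dot_point_eq_zero_iff]
  convert h using 2
  fin_cases j <;> simp [perp]

lemma isGenPair_Ccode (m : ℕ) :
    IsGenPair (Ccode (5 * m + 2) m m m m m) (row1 (5 * m + 2) m) (row2 (5 * m + 2) m m m m) := by
  refine ⟨LinearIndependent.pair_iff.2 fun x y hxy => ?_, rfl⟩
  have h₀ := congrFun hxy ⟨0, by omega⟩
  have h₁ := congrFun hxy ⟨1, by omega⟩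
  simp only [Pi.add_apply, Pi.smul_apply, smul_eq_mul, Pi.zero_apply, row1, row2] at h₀ h₁
  constructor
  · simpa using h₀
  · simpa [show 1 < 2 + m by omega] using h₁

lemma isOptimalLCD_Ccode (m : ℕ) :
    IsOptimalLCD (5 * m + 2) (4 * m + 1) (Ccode (5 * m + 2) m m m m m) := by
  have hg := isGenPair_Ccode m
  refine ⟨hg.finrank_eq_two, hg.hasMinWeight_of_zeroCount_point (fun j => ?_) 0 ?_, ?_, ?_⟩
  · rw [zeroCount_row_point]
    split_ifs <;> omega
  · rw [zeroCount_row_point]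
    simp
    omega
  · rw [hg.isHermLCD_iff, det_gram]
    simp only [zeroCount_row_point]
    have := ω4_spec
    norm_num
    grind
  · simp [optimalDist]
    omega

end QuaternaryCode

/-- for every `m ≥ 0` there exists an optimal Hermitian LCD
`[5m + 2, 2, 4m + 1]` code, and it is unique up to equivalence. -/
theorem stmt11 (m : ℕ) :
    (∃ C : Submodule F4 (Fin (5 * m + 2) → F4), IsOptimalLCD (5 * m + 2) (4 * m + 1) C) ∧
    ∀ C C' : Submodule F4 (Fin (5 * m + 2) → F4),
      IsOptimalLCD (5 * m + 2) (4 * m + 1) C → IsOptimalLCD (5 * m + 2) (4 * m + 1) C' →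
        codeEquiv C C' := by
  open QuaternaryCode in
  refine ⟨⟨_, isOptimalLCD_Ccode m⟩, fun C C' hC hC' => ?_⟩
  obtain ⟨g₁, g₂, hg, hnz, hz⟩ := exists_isGenPair_of_isOptimalLCD hC
  obtain ⟨g₁', g₂', hg', hnz', hz'⟩ := exists_isGenPair_of_isOptimalLCD hC'
  exact hg.codeEquiv hg' hnz hnz' fun j => (hz j).trans (hz' j).symm
end
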